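/- Suppose P is a strictly D_c-stable partition of N. Then P is the unique D_c-stable partition of N, the unique D_p-stable partition of N, and the unique D_hp-stable partition of N. -/

import Mathlib

open Finset

variable {α : Type*} [DecidableEq α] [Fintype α]

/-- A collection: a family of pairwise disjoint nonempty coalitions of `N`. -/
def IsCollection (C : Finset (Finset α)) : Prop :=
  (∀ S ∈ C, S ≠ ∅) ∧ (C : Set (Finset α)).PairwiseDisjoint id

/-- A partition of the set `S`: pairwise disjoint nonempty subsets whose union is `S`. -/
def IsPartitionOf (S : Finset α) (C : Finset (Finset α)) : Prop :=
  IsCollection C ∧ C.sup id = S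

/-- A partition of the grand coalition `N` (= `Finset.univ`). -/
def IsPartition (P : Finset (Finset α)) : Prop :=
  IsPartitionOf Finset.univ P

/-- The social welfare of a collection. -/
def sw (v : Finset α → ℝ) (C : Finset (Finset α)) : ℝ := ∑ S ∈ C, v S

/-- The collection `C` in the frame of the partition `P`:
`C[P] = {P₁ ∩ U, …, P_k ∩ U} \ {∅}` where `U` is the union of `C`. -/
def frame (C P : Finset (Finset α)) : Finset (Finset α) :=
  (P.image (fun Pi => Pi ∩ C.sup id)).erase ∅

/-- `P` is `D_c`-stable: `sw(C[P]) ≥ sw(C)` for every collection `C` in `N`. -/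
def DcStable (v : Finset α → ℝ) (P : Finset (Finset α)) : Prop :=
  ∀ C : Finset (Finset α), IsCollection C → sw v (frame C P) ≥ sw v C

/-- `P` is `D_p`-stable: `sw(P) ≥ sw(Q)` for every partition `Q` of `N`. -/
def DpStable (v : Finset α → ℝ) (P : Finset (Finset α)) : Prop :=
  ∀ Q : Finset (Finset α), IsPartition Q → sw v P ≥ sw v Q

/-- `Q` is `P`-homogeneous: every `Q_j` is contained in some `P_i` or contains some `P_i`. -/
def Homogeneous (P Q : Finset (Finset α)) : Prop :=
  ∀ Qj ∈ Q, ∃ Pi ∈ P, Qj ⊆ Pi ∨ Pi ⊆ Qj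

/-- `P` is `D_hp`-stable: `sw(P) ≥ sw(Q)` for every `P`-homogeneous partition `Q` of `N`. -/
def DhpStable (v : Finset α → ℝ) (P : Finset (Finset α)) : Prop :=
  ∀ Q : Finset (Finset α), IsPartition Q → Homogeneous P Q → sw v P ≥ sw v Q

/-- `P` is strictly `D_c`-stable: `sw(C[P]) > sw(C)` for every collection `C`
that is not a subset of `P`. -/
def StrictlyDcStable (v : Finset α → ℝ) (P : Finset (Finset α)) : Prop :=
  ∀ C : Finset (Finset α), IsCollection C → ¬ C ⊆ P → sw v (frame C P) > sw v C

/-- `P` is strictly `D_p`-stable. -/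
def StrictlyDpStable (v : Finset α → ℝ) (P : Finset (Finset α)) : Prop :=
  ∀ Q : Finset (Finset α), IsPartition Q → Q ≠ P → sw v P > sw v Q

/-- `P` is strictly `D_hp`-stable. -/
def StrictlyDhpStable (v : Finset α → ℝ) (P : Finset (Finset α)) : Prop :=
  ∀ Q : Finset (Finset α), IsPartition Q → Homogeneous P Q → Q ≠ P → sw v P > sw v Q

/-- The merge rule: distinct coalitions `T₁, …, T_k` (`k ≥ 2`) of `P` with
`∑ v(T_j) < v(∪ T_j)` are replaced by their union. -/
def MergeStep (v : Finset α → ℝ) (P P' : Finset (Finset α)) : Prop :=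
  ∃ T : Finset (Finset α), T ⊆ P ∧ 2 ≤ T.card ∧
    ∑ S ∈ T, v S < v (T.sup id) ∧ P' = insert (T.sup id) (P \ T)

/-- The split rule: a coalition `T` of `P` admitting a partition `{T₁, …, T_k}` (`k ≥ 2`)
with `v(T) < ∑ v(T_j)` is replaced by the coalitions `T₁, …, T_k`. -/
def SplitStep (v : Finset α → ℝ) (P P' : Finset (Finset α)) : Prop :=
  ∃ T ∈ P, ∃ D : Finset (Finset α), IsPartitionOf T D ∧ 2 ≤ D.card ∧
    v T < ∑ S ∈ D, v S ∧ P' = (P.erase T) ∪ D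

/-! A partition frames every partition to itself, so `D_c`-stability implies `D_p`-stability,
which implies `D_hp`-stability; it therefore suffices that every `D_hp`-stable partition `Q`
equals `P`. If `Q ≠ P`, some subfamily `C ⊆ Q` is not a subfamily of `P`: a single block of `Q`
that lies in no block of `P`, or, when `Q` refines `P`, the blocks of `Q` inside a block of `P`
that is not a block of `Q`. Replacing `C` in `Q` by `C[P]` gives a `Q`-homogeneous partition,
and strict `D_c`-stability of `P` says exactly that this raises the social welfare of `Q`. -/

section

variable {N : Type*}

theorem IsCollection.eq_of_mem_of_mem {C : Finset (Finset N)} (hC : IsCollection C)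
    {A B : Finset N} (hA : A ∈ C) (hB : B ∈ C) {x : N} (hxA : x ∈ A) (hxB : x ∈ B) : A = B :=
  hC.2.elim_finset hA hB x hxA hxB

theorem IsCollection.subset {C D : Finset (Finset N)} (hC : IsCollection C) (hDC : D ⊆ C) :
    IsCollection D :=
  ⟨fun S hS => hC.1 S (hDC hS), hC.2.subset (coe_subset.2 hDC)⟩

variable [DecidableEq N]

theorem IsCollection.disjoint_sup_of_mem_sdiff {Q C : Finset (Finset N)} (hQ : IsCollection Q)
    (hCQ : C ⊆ Q) {S : Finset N} (hS : S ∈ Q \ C) : Disjoint S (C.sup id) := by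
  rw [mem_sdiff] at hS
  exact Finset.disjoint_sup_right.2 fun T hT =>
    hQ.2 hS.1 (hCQ hT) fun hST => hS.2 (hST ▸ hT)

theorem mem_frame {C P : Finset (Finset N)} {S : Finset N} :
    S ∈ frame C P ↔ S ≠ ∅ ∧ ∃ Pi ∈ P, Pi ∩ C.sup id = S := by
  rw [frame, mem_erase, mem_image]

theorem subset_sup_of_mem_frame {C P : Finset (Finset N)} {S : Finset N} (hS : S ∈ frame C P) :
    S ⊆ C.sup id := by
  obtain ⟨-, Pi, -, rfl⟩ := mem_frame.1 hS
  exact inter_subset_right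

theorem IsCollection.frame {P : Finset (Finset N)} (hP : IsCollection P) (C : Finset (Finset N)) :
    IsCollection (frame C P) := by
  refine ⟨fun S hS => (mem_frame.1 hS).1, fun S hS T hT hST => ?_⟩
  obtain ⟨-, Pi, hPi, rfl⟩ := mem_frame.1 hS
  obtain ⟨-, Pk, hPk, rfl⟩ := mem_frame.1 hT
  have hik : Pi ≠ Pk := fun h => hST (h ▸ rfl)
  exact (hP.2 hPi hPk hik).mono inter_subset_left inter_subset_left

theorem sup_frame {C P : Finset (Finset N)} (h : C.sup id ⊆ P.sup id) :
    (frame C P).sup id = C.sup id := by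
  rw [frame, ← bot_eq_empty, sup_erase_bot, sup_image]
  exact (sup_inf_distrib_right P id (C.sup id)).symm.trans (inf_eq_right.2 h)

theorem frame_eq_left_of_subset {C P : Finset (Finset N)} (hP : IsCollection P) (hCP : C ⊆ P) :
    frame C P = C := by
  ext S
  rw [mem_frame]
  constructor
  · rintro ⟨hS, Pi, hPi, rfl⟩
    obtain ⟨x, hx⟩ := nonempty_iff_ne_empty.2 hS
    rw [mem_inter] at hx
    obtain ⟨Sj, hSj, hxSj⟩ := mem_sup.1 hx.2
    obtain rfl := hP.eq_of_mem_of_mem hPi (hCP hSj) hx.1 hxSj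
    have hPiC : Pi ⊆ C.sup id := le_sup (f := id) hSj
    rwa [inter_eq_left.2 hPiC]
  · intro hS
    exact ⟨hP.1 S (hCP hS), S, hCP hS, inter_eq_left.2 (le_sup (f := id) hS)⟩

theorem frame_eq_right_of_sup_subset {C P : Finset (Finset N)} (hP : IsCollection P)
    (h : P.sup id ⊆ C.sup id) : frame C P = P := by
  have hPi : ∀ Pi ∈ P, Pi ∩ C.sup id = Pi := fun Pi hPi =>
    inter_eq_left.2 ((le_sup (f := id) hPi).trans h)
  rw [frame, image_congr hPi, image_id']
  exact erase_eq_of_notMem fun h0 => hP.1 ∅ h0 rfl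

theorem sw_sdiff_union_frame (v : Finset N → ℝ) {Q C : Finset (Finset N)} (hQ : IsCollection Q)
    (hCQ : C ⊆ Q) (P : Finset (Finset N)) :
    sw v (Q \ C ∪ frame C P) + sw v C = sw v Q + sw v (frame C P) := by
  have hdisj : Disjoint (Q \ C) (frame C P) := disjoint_left.2 fun S hSQ hSF =>
    (mem_frame.1 hSF).1 (disjoint_self.1
      ((hQ.disjoint_sup_of_mem_sdiff hCQ hSQ).mono_right (subset_sup_of_mem_frame hSF)))
  simp only [sw]
  rw [sum_union hdisj, ← sum_sdiff hCQ]
  ring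

theorem homogeneous_frame_singleton {P Q : Finset (Finset N)} {Qj : Finset N} (hQj : Qj ∈ Q) :
    Homogeneous Q (frame {Qj} P) := fun S hS =>
  ⟨Qj, hQj, Or.inl (by simpa using subset_sup_of_mem_frame hS)⟩

theorem homogeneous_frame_of_sup_subset {P Q C : Finset (Finset N)} (hP : IsCollection P)
    (hCQ : C ⊆ Q) {Pi : Finset N} (hPi : Pi ∈ P) (hC : C.sup id ⊆ Pi) :
    Homogeneous Q (frame C P) := by
  intro S hS
  obtain ⟨hS0, Pk, hPk, rfl⟩ := mem_frame.1 hS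
  obtain ⟨x, hx⟩ := nonempty_iff_ne_empty.2 hS0
  rw [mem_inter] at hx
  obtain ⟨Qj, hQj, -⟩ := mem_sup.1 hx.2
  obtain rfl := hP.eq_of_mem_of_mem hPk hPi hx.1 (hC hx.2)
  exact ⟨Qj, hCQ hQj, Or.inr (subset_inter ((le_sup (f := id) hQj).trans hC) (le_sup (f := id) hQj))⟩

variable [Fintype N]

theorem IsPartition.exists_mem {P : Finset (Finset N)} (hP : IsPartition P) (x : N) :
    ∃ S ∈ P, x ∈ S :=
  mem_sup.1 (hP.2 ▸ mem_univ x)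

theorem IsPartition.eq_of_subset {P Q : Finset (Finset N)} (hP : IsPartition P)
    (hQ : IsPartition Q) (hQP : Q ⊆ P) : Q = P := by
  refine hQP.antisymm fun Pi hPi => ?_
  obtain ⟨x, hx⟩ := nonempty_iff_ne_empty.2 (hP.1.1 Pi hPi)
  obtain ⟨Qj, hQj, hxQj⟩ := hQ.exists_mem x
  rwa [hP.1.eq_of_mem_of_mem hPi (hQP hQj) hx hxQj]

theorem IsPartition.sdiff_union_frame {P Q C : Finset (Finset N)} (hP : IsPartition P)
    (hQ : IsPartition Q) (hCQ : C ⊆ Q) : IsPartition (Q \ C ∪ frame C P) := by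
  refine ⟨⟨fun S hS => ?_, ?_⟩, ?_⟩
  · rcases mem_union.1 hS with hS | hS
    · exact hQ.1.1 S (mem_sdiff.1 hS).1
    · exact (mem_frame.1 hS).1
  · rw [coe_union, Set.pairwiseDisjoint_union]
    refine ⟨hQ.1.2.subset (coe_subset.2 sdiff_subset), (hP.1.frame C).2,
      fun S hS T hT _ => ?_⟩
    exact (hQ.1.disjoint_sup_of_mem_sdiff hCQ hS).mono_right (subset_sup_of_mem_frame hT)
  · rw [sup_union, sup_frame (hP.2 ▸ subset_univ _), ← sup_union, sdiff_union_of_subset hCQ,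
      hQ.2]

end

section

variable {N : Type*} [DecidableEq N] {v : Finset N → ℝ} {P : Finset (Finset N)}

theorem StrictlyDcStable.dcStable (hP : IsCollection P) (h : StrictlyDcStable v P) :
    DcStable v P := by
  intro C hC
  by_cases hCP : C ⊆ P
  · rw [frame_eq_left_of_subset hP hCP]
  · exact (h C hC hCP).le

theorem StrictlyDcStable.sw_lt_sdiff_union_frame (h : StrictlyDcStable v P)
    {Q C : Finset (Finset N)} (hQ : IsCollection Q) (hCQ : C ⊆ Q) (hCP : ¬C ⊆ P) :
    sw v Q < sw v (Q \ C ∪ frame C P) := by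
  have hgain := h C (hQ.subset hCQ) hCP
  have hsplit := sw_sdiff_union_frame v hQ hCQ P
  linarith

variable [Fintype N]

theorem DcStable.dpStable (hP : IsCollection P) (h : DcStable v P) : DpStable v P :=
  fun Q hQ => by
    simpa only [frame_eq_right_of_sup_subset hP (hQ.2 ▸ subset_univ _)] using h Q hQ.1

theorem DpStable.dhpStable (h : DpStable v P) : DhpStable v P :=
  fun Q hQ _ => h Q hQ

theorem StrictlyDcStable.not_dhpStable (h : StrictlyDcStable v P) (hP : IsPartition P)
    {Q C : Finset (Finset N)} (hQ : IsPartition Q) (hCQ : C ⊆ Q) (hCP : ¬C ⊆ P)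
    (hhom : Homogeneous Q (frame C P)) : ¬DhpStable v Q := by
  intro hQhp
  have hhom' : Homogeneous Q (Q \ C ∪ frame C P) := fun S hS =>
    (mem_union.1 hS).elim (fun hS => ⟨S, (mem_sdiff.1 hS).1, Or.inl subset_rfl⟩) (hhom S)
  exact (h.sw_lt_sdiff_union_frame hQ.1 hCQ hCP).not_ge
    (hQhp _ (hP.sdiff_union_frame hQ hCQ) hhom')

theorem StrictlyDcStable.eq_of_dhpStable (h : StrictlyDcStable v P) (hP : IsPartition P)
    {Q : Finset (Finset N)} (hQ : IsPartition Q) (hQhp : DhpStable v Q) : Q = P := by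
  by_contra hne
  by_cases hrefine : ∀ Qj ∈ Q, ∃ Pi ∈ P, Qj ⊆ Pi
  · obtain ⟨Pi, hPi, hPiQ⟩ : ∃ Pi ∈ P, Pi ∉ Q := by
      by_contra! hPQ
      exact hne (hQ.eq_of_subset hP hPQ).symm
    have hCP : ¬Q.filter (· ⊆ Pi) ⊆ P := by
      intro hsub
      obtain ⟨x, hx⟩ := nonempty_iff_ne_empty.2 (hP.1.1 Pi hPi)
      obtain ⟨Qj, hQj, hxQj⟩ := hQ.exists_mem x
      obtain ⟨Pk, hPk, hQjPk⟩ := hrefine Qj hQj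
      obtain rfl := hP.1.eq_of_mem_of_mem hPk hPi (hQjPk hxQj) hx
      have hQjP : Qj ∈ P := hsub (mem_filter.2 ⟨hQj, hQjPk⟩)
      exact hPiQ (hP.1.eq_of_mem_of_mem hQjP hPk hxQj hx ▸ hQj)
    exact h.not_dhpStable hP hQ (filter_subset _ Q) hCP
      (homogeneous_frame_of_sup_subset hP.1 (filter_subset _ Q) hPi
        (Finset.sup_le fun S hS => (mem_filter.1 hS).2)) hQhp
  · push Not at hrefine
    obtain ⟨Qj, hQj, hQjP⟩ := hrefine
    exact h.not_dhpStable hP hQ (singleton_subset_iff.2 hQj)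
      (fun hsub => hQjP Qj (singleton_subset_iff.1 hsub) subset_rfl)
      (homogeneous_frame_singleton hQj) hQhp

end

theorem strictly_Dc_stable_unique_general (v : Finset α → ℝ)
    (P : Finset (Finset α)) (hP : IsPartition P) (hstrict : StrictlyDcStable v P) :
    (DcStable v P ∧ ∀ Q : Finset (Finset α), IsPartition Q → DcStable v Q → Q = P) ∧
    (DpStable v P ∧ ∀ Q : Finset (Finset α), IsPartition Q → DpStable v Q → Q = P) ∧
    (DhpStable v P ∧ ∀ Q : Finset (Finset α), IsPartition Q → DhpStable v Q → Q = P) := by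
  have hDc : DcStable v P := hstrict.dcStable hP.1
  have hunique : ∀ Q : Finset (Finset α), IsPartition Q → DhpStable v Q → Q = P :=
    fun Q hQ => hstrict.eq_of_dhpStable hP hQ
  exact ⟨⟨hDc, fun Q hQ hQDc => hunique Q hQ (hQDc.dpStable hQ.1).dhpStable⟩,
    ⟨hDc.dpStable hP.1, fun Q hQ hQDp => hunique Q hQ hQDp.dhpStable⟩,
    ⟨(hDc.dpStable hP.1).dhpStable, hunique⟩⟩

/-- Theorem 9(ii)-(iv): a strictly `D_c`-stable partition is the unique `D_c`-stable,
the unique `D_p`-stable, and the unique `D_hp`-stable partition. -/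
theorem strictly_Dc_stable_unique [Nonempty α] (v : Finset α → ℝ) (hv : v ∅ = 0)
    (P : Finset (Finset α)) (hP : IsPartition P) (hstrict : StrictlyDcStable v P) :
    (DcStable v P ∧ ∀ Q : Finset (Finset α), IsPartition Q → DcStable v Q → Q = P) ∧
    (DpStable v P ∧ ∀ Q : Finset (Finset α), IsPartition Q → DpStable v Q → Q = P) ∧
    (DhpStable v P ∧ ∀ Q : Finset (Finset α), IsPartition Q → DhpStable v Q → Q = P) :=
  strictly_Dc_stable_unique_general v P hP hstrict
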